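/- Let X be an L₁-predual space (X* isometric to some L₁(μ)) and J an M-ideal in X. Then (X, B_J, K(X)) has property-(P₁): for every nonempty compact F ⊆ X, cent_{B_J}(F) ≠ ∅, and for every ε > 0 and every x ∈ B_J with r(x,F) ≤ rad_{B_J}(F) + ε, there exists z ∈ cent_{B_J}(F) with ‖x − z‖ ≤ ε. -/

import Mathlib

open Metric Set Pointwise

/-- `r(x,B) = sup_{b ∈ B} ‖x - b‖`. -/
noncomputable def chebR {X : Type*} [NormedAddCommGroup X] (x : X) (B : Set X) : ℝ :=
  ⨆ b : B, ‖x - (b : X)‖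

/-- `rad_V(B) = inf_{v ∈ V} r(v,B)`, the restricted Chebyshev radius. -/
noncomputable def chebRad {X : Type*} [NormedAddCommGroup X] (V B : Set X) : ℝ :=
  ⨅ v : V, chebR (v : X) B

/-- `cent_V(B)`, the set of restricted Chebyshev centers of `B` w.r.t. `V`. -/
noncomputable def chebCent {X : Type*} [NormedAddCommGroup X] (V B : Set X) : Set X :=
  {v ∈ V | chebR v B ≤ chebRad V B}

/-- `cent_V(B,δ) = {v ∈ V : r(v,B) ≤ rad_V(B) + δ}`. -/
noncomputable def chebCentA {X : Type*} [NormedAddCommGroup X] (V B : Set X) (δ : ℝ) : Set X :=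
  {v ∈ V | chebR v B ≤ chebRad V B + δ}

open NormedSpace MeasureTheory in
/-- `X` is an `L₁`-predual: `X*` is isometrically isomorphic to some `L₁(μ)`. -/
def IsL1Predual (X : Type*) [NormedAddCommGroup X] [NormedSpace ℝ X] : Prop :=
  ∃ (Ω : Type) (_ : MeasurableSpace Ω) (μ : Measure Ω),
    Nonempty (StrongDual ℝ X ≃ₗᵢ[ℝ] Lp ℝ 1 μ)

open NormedSpace in
/-- `J` is an `M`-ideal in `X`: the annihilator `J⊥` is the range of an `L`-projection on `X*`. -/
def IsMIdeal {X : Type*} [NormedAddCommGroup X] [NormedSpace ℝ X] (J : Submodule ℝ X) : Prop :=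
  ∃ P : StrongDual ℝ X →L[ℝ] StrongDual ℝ X, (∀ φ, P (P φ) = P φ) ∧
    (∀ φ : StrongDual ℝ X, ‖φ‖ = ‖P φ‖ + ‖φ - P φ‖) ∧
    Set.range P = {f : StrongDual ℝ X | ∀ x ∈ J, f x = 0}

/-!
Identify `X*` with `L₁(μ)`. Functionals `φ₁, …, φₙ` with `∑ φᵢ = 0` then split pointwise as
`φᵢ = ∑ⱼ kᵢⱼ` with `(kᵢⱼ)` antisymmetric and `∑ⱼ ‖kᵢⱼ‖ ≤ ‖φᵢ‖` (move the positive mass to the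
negative mass proportionally), so `∑ φᵢ(aᵢ) = ½ ∑ kᵢⱼ(aᵢ - aⱼ) ≤ ∑ ρᵢ ‖φᵢ‖` as soon as the balls
`B[aᵢ, ρᵢ]` meet pairwise. Combined with the `L`-projection onto `J⊥` and a separation of `(aᵢ)`
from the open convex set `diag J + ∏ B(0, ρᵢ + ε)` in `Xⁿ`, this shows that pairwise meeting balls
which each meet `J` have, once enlarged by `ε`, a common point in `J`.

Applied to `B[0, 1]`, `B[x, ε]`, a ball around the current approximation and the balls of radius
`rad + η` around a finite `η`-net of `F`, this moves an almost-center of `F` in `B_J` by a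
controlled amount to a better one. Iterating with geometrically decreasing errors gives a Cauchy
sequence whose limit is a restricted Chebyshev center within `ε` of `x`.
-/

open MeasureTheory Filter Topology

section SkewDecomposition

variable {ι : Type*} [Fintype ι]

structure IsSkewDecomposition {E : Type*} [SeminormedAddCommGroup E] (g : ι → E)
    (h : ι → ι → E) : Prop where
  antisymm : ∀ i j, h j i = -h i j
  sum_eq : ∀ i, ∑ j, h i j = g i
  sum_norm_le : ∀ i, ∑ j, ‖h i j‖ ≤ ‖g i‖

noncomputable def transportMatrix (x : ι → ℝ) (i j : ι) : ℝ :=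
  ((x i)⁺ * (x j)⁻ - (x j)⁺ * (x i)⁻) / ∑ k, (x k)⁺

lemma transportMatrix_swap (x : ι → ℝ) (i j : ι) :
    transportMatrix x j i = -transportMatrix x i j := by
  unfold transportMatrix; ring

lemma sum_negPart_eq_sum_posPart {x : ι → ℝ} (hx : ∑ k, x k = 0) :
    ∑ k, (x k)⁻ = ∑ k, (x k)⁺ := by
  have := Finset.sum_sub_distrib (s := Finset.univ) (fun k => (x k)⁺) (fun k => (x k)⁻)
  simp only [posPart_sub_negPart, hx] at this
  linarith

lemma sum_transportMatrix {x : ι → ℝ} (hx : ∑ k, x k = 0) (i : ι) :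
    ∑ j, transportMatrix x i j = x i := by
  set S := ∑ k, (x k)⁺
  have hrow : ∑ j, transportMatrix x i j = x i * (S / S) := by
    simp only [transportMatrix, ← Finset.sum_div, Finset.sum_sub_distrib, ← Finset.mul_sum,
      ← Finset.sum_mul, sum_negPart_eq_sum_posPart hx]
    linear_combination (S / S) * posPart_sub_negPart (x i)
  rcases eq_or_ne S 0 with hS | hS
  · have hpos : (x i)⁺ = 0 := le_antisymm
      (hS ▸ Finset.single_le_sum (fun k _ => posPart_nonneg (x k)) (Finset.mem_univ i))
      (posPart_nonneg _)
    have hneg : (x i)⁻ = 0 := by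
      refine le_antisymm ?_ (negPart_nonneg _)
      calc (x i)⁻ ≤ ∑ k, (x k)⁻ :=
            Finset.single_le_sum (fun k _ => negPart_nonneg (x k)) (Finset.mem_univ i)
        _ = 0 := (sum_negPart_eq_sum_posPart hx).trans hS
    rw [hrow, ← posPart_sub_negPart (x i), hpos, hneg]
    ring
  · rw [hrow, div_self hS, mul_one]

lemma sum_abs_transportMatrix_le {x : ι → ℝ} (hx : ∑ k, x k = 0) (i : ι) :
    ∑ j, |transportMatrix x i j| ≤ |x i| := by
  set S := ∑ k, (x k)⁺
  have hS : 0 ≤ S := Finset.sum_nonneg fun k _ => posPart_nonneg (x k)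
  calc ∑ j, |transportMatrix x i j|
      ≤ ∑ j, ((x i)⁺ * (x j)⁻ + (x j)⁺ * (x i)⁻) / S := by
        gcongr with j
        rw [transportMatrix, abs_div, abs_of_nonneg hS]
        gcongr
        refine (abs_sub _ _).trans_eq ?_
        rw [abs_of_nonneg (by positivity), abs_of_nonneg (by positivity)]
    _ = |x i| * (S / S) := by
        simp only [← Finset.sum_div, Finset.sum_add_distrib, ← Finset.mul_sum, ← Finset.sum_mul,
          sum_negPart_eq_sum_posPart hx, ← posPart_add_negPart (x i)]
        ring
    _ ≤ |x i| := mul_le_of_le_one_right (abs_nonneg _) (div_self_le_one S)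

theorem MeasureTheory.L1.exists_isSkewDecomposition {Ω : Type*} [MeasurableSpace Ω]
    {μ : Measure Ω} (g : ι → Lp ℝ 1 μ) (hg : ∑ i, g i = 0) :
    ∃ h, IsSkewDecomposition g h := by
  set H : ι → ι → Ω → ℝ := fun i j ω => transportMatrix (fun k => g k ω) i j
  have hsum : ∀ᵐ ω ∂μ, ∑ k, g k ω = 0 := by
    filter_upwards [Lp.coeFn_fun_finsetSum Finset.univ g, Lp.coeFn_zero ℝ 1 μ] with ω h₁ h₀
    rw [← h₁, hg, h₀, Pi.zero_apply]
  have hle : ∀ i, ∀ᵐ ω ∂μ, ∑ j, |H i j ω| ≤ |g i ω| := fun i =>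
    hsum.mono fun ω hω => sum_abs_transportMatrix_le hω i
  have hint : ∀ i j, Integrable (H i j) μ := by
    intro i j
    have hmeas : Measurable fun x : ι → ℝ => transportMatrix x i j := by
      unfold transportMatrix posPart negPart; fun_prop
    refine (L1.integrable_coeFn (g i)).mono
      (hmeas.comp_aemeasurable (aemeasurable_pi_lambda _ fun k =>
        (Lp.aestronglyMeasurable (g k)).aemeasurable)).aestronglyMeasurable ?_
    filter_upwards [hle i] with ω hω
    simp only [Real.norm_eq_abs]
    exact (Finset.single_le_sum (f := fun j => |H i j ω|) (fun _ _ => abs_nonneg _)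
      (Finset.mem_univ j)).trans hω
  refine ⟨fun i j => (hint i j).toL1 _, ⟨fun i j => ?_, fun i => ?_, fun i => ?_⟩⟩
  · have : H j i = -H i j := funext fun ω => transportMatrix_swap _ i j
    rw [← Integrable.toL1_neg, Integrable.toL1_eq_toL1_iff, this]
  · apply Lp.ext
    filter_upwards [Lp.coeFn_fun_finsetSum Finset.univ (fun j => (hint i j).toL1 _),
      ae_all_iff.2 fun j => (hint i j).coeFn_toL1, hsum] with ω h₁ h₂ h₀
    rw [h₁, Finset.sum_congr rfl fun j _ => h₂ j]
    exact sum_transportMatrix h₀ i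
  · calc ∑ j, ‖(hint i j).toL1 _‖ = ∑ j, ∫ ω, |H i j ω| ∂μ := by
          simp only [L1.norm_of_fun_eq_integral_norm, Real.norm_eq_abs]
      _ = ∫ ω, ∑ j, |H i j ω| ∂μ := (integral_finsetSum _ fun j _ => (hint i j).abs).symm
      _ ≤ ∫ ω, |g i ω| ∂μ :=
          integral_mono_ae (integrable_finsetSum _ fun j _ => (hint i j).abs)
            (L1.integrable_coeFn (g i)).abs (hle i)
      _ = ‖g i‖ := by simp only [L1.norm_eq_integral_norm, Real.norm_eq_abs]

end SkewDecomposition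

section Duality

variable {ι : Type*} [Fintype ι] {E : Type*} [SeminormedAddCommGroup E] [NormedSpace ℝ E]

lemma IsSkewDecomposition.map {F G : Type*} [SeminormedAddCommGroup F]
    [SeminormedAddCommGroup G] [Module ℝ F] [Module ℝ G] {g : ι → F} {h : ι → ι → F}
    (hd : IsSkewDecomposition g h) (e : F →ₗᵢ[ℝ] G) :
    IsSkewDecomposition (fun i => e (g i)) fun i j => e (h i j) where
  antisymm i j := by rw [hd.antisymm, map_neg]
  sum_eq i := by rw [← map_sum, hd.sum_eq]
  sum_norm_le i := by simpa only [LinearIsometry.norm_map] using hd.sum_norm_le i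

theorem IsL1Predual.exists_isSkewDecomposition {X : Type*} [NormedAddCommGroup X]
    [NormedSpace ℝ X] (hX : IsL1Predual X) (φ : ι → StrongDual ℝ X) (hφ : ∑ i, φ i = 0) :
    ∃ k, IsSkewDecomposition φ k := by
  obtain ⟨Ω, _, μ, ⟨T⟩⟩ := hX
  obtain ⟨h, hh⟩ := L1.exists_isSkewDecomposition (fun i => T (φ i))
    (by rw [← map_sum, hφ, map_zero])
  have := hh.map T.symm.toLinearIsometry
  simp only [LinearIsometryEquiv.coe_toLinearIsometry,
    LinearIsometryEquiv.symm_apply_apply] at this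
  exact ⟨_, this⟩

theorem IsSkewDecomposition.sum_apply_le {φ : ι → StrongDual ℝ E}
    {k : ι → ι → StrongDual ℝ E} (hk : IsSkewDecomposition φ k) (a : ι → E) (ρ : ι → ℝ)
    (hpair : ∀ i j, ‖a i - a j‖ ≤ ρ i + ρ j) :
    ∑ i, φ i (a i) ≤ ∑ i, ρ i * ‖φ i‖ := by
  have hρ : ∀ i, 0 ≤ ρ i := fun i => by linarith [hpair i i, norm_nonneg (a i - a i)]
  have hswap : ∑ i, ∑ j, k i j (a j) = -∑ i, ∑ j, k i j (a i) := by
    rw [Finset.sum_comm, ← Finset.sum_neg_distrib]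
    refine Finset.sum_congr rfl fun i _ => ?_
    rw [← Finset.sum_neg_distrib]
    exact Finset.sum_congr rfl fun j _ => by rw [hk.antisymm, neg_apply]
  have hnorm_swap : ∑ i, ∑ j, ‖k i j‖ * ρ j = ∑ i, ∑ j, ‖k i j‖ * ρ i := by
    rw [Finset.sum_comm]
    exact Finset.sum_congr rfl fun i _ =>
      Finset.sum_congr rfl fun j _ => by rw [hk.antisymm, norm_neg]
  calc ∑ i, φ i (a i) = (∑ i, ∑ j, k i j (a i - a j)) / 2 := by
        simp only [map_sub, Finset.sum_sub_distrib, hswap, ← hk.sum_eq, sum_apply]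
        ring
    _ ≤ (∑ i, ∑ j, ‖k i j‖ * (ρ i + ρ j)) / 2 := by
        gcongr with i _ j
        exact (le_abs_self _).trans ((k i j).le_opNorm_of_le (hpair i j))
    _ = ∑ i, ρ i * ∑ j, ‖k i j‖ := by
        simp only [mul_add, Finset.sum_add_distrib, hnorm_swap, add_self_div_two]
        simp only [Finset.mul_sum, mul_comm]
    _ ≤ ∑ i, ρ i * ‖φ i‖ := by
        gcongr with i
        exacts [hρ i, hk.sum_norm_le i]

end Duality

section BallIntersection

variable {ι : Type*} [Fintype ι] {X : Type*} [NormedAddCommGroup X] [NormedSpace ℝ X]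

lemma StrongDual.exists_mem_ball_lt_apply (f : StrongDual ℝ X) {c r : ℝ} (hc : 0 < c)
    (hr : r < c * ‖f‖) : ∃ z ∈ ball (0 : X) c, r < f z := by
  obtain ⟨x, hx, hfx⟩ := f.exists_lt_apply_of_lt_opNorm (r := r / c)
    (by rwa [div_lt_iff₀' hc])
  rw [div_lt_iff₀' hc, Real.norm_eq_abs] at hfx
  have hcx : ‖c • x‖ < c := by
    rw [norm_smul, Real.norm_of_nonneg hc.le]; exact mul_lt_of_lt_one_right hc hx
  rcases le_or_gt 0 (f x) with hpos | hneg
  · refine ⟨c • x, mem_ball_zero_iff.2 hcx, ?_⟩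
    rwa [map_smul, smul_eq_mul, ← abs_of_nonneg hpos]
  · refine ⟨-(c • x), mem_ball_zero_iff.2 (by rwa [norm_neg]), ?_⟩
    rwa [map_neg, map_smul, smul_eq_mul, ← mul_neg, ← abs_of_neg hneg]

lemma sum_mul_norm_le_of_forall_mem_pi_ball (f : ι → StrongDual ℝ X) {c : ι → ℝ}
    (hc : ∀ i, 0 < c i) {M : ℝ}
    (h : ∀ z ∈ univ.pi fun i => ball (0 : X) (c i), ∑ i, f i (z i) < M) :
    ∑ i, c i * ‖f i‖ ≤ M := by
  refine le_of_forall_pos_lt_add fun δ hδ => ?_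
  set η := δ / ((Finset.univ : Finset ι).card + 1)
  have hη : 0 < η := by positivity
  choose z hz hfz using fun i => (f i).exists_mem_ball_lt_apply (hc i) (sub_lt_self _ hη)
  have hnη : (Finset.univ : Finset ι).card * η < δ := by
    rw [mul_div_assoc', div_lt_iff₀ (by positivity)]; linarith
  have hsum : ∑ i, c i * ‖f i‖ - (Finset.univ : Finset ι).card * η ≤ ∑ i, f i (z i) := by
    simpa only [Finset.sum_sub_distrib, Finset.sum_const, nsmul_eq_mul] using
      Finset.sum_le_sum fun i _ => (hfz i).le
  linarith [h z fun i _ => hz i]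

variable {J : Submodule ℝ X}

theorem IsMIdeal.sum_apply_le (hX : IsL1Predual X) (hJ : IsMIdeal J)
    (f : ι → StrongDual ℝ X) (hfJ : ∀ y ∈ J, ∑ i, f i y = 0) (a b : ι → X) (ρ : ι → ℝ)
    (hpair : ∀ i j, ‖a i - a j‖ ≤ ρ i + ρ j) (hbJ : ∀ i, b i ∈ J)
    (hab : ∀ i, ‖a i - b i‖ ≤ ρ i) :
    ∑ i, f i (a i) ≤ ∑ i, ρ i * ‖f i‖ := by
  obtain ⟨P, hPP, hPL, hPran⟩ := hJ
  have hPJ : ∀ φ, ∀ y ∈ J, P φ y = 0 := fun φ => (hPran.subset ⟨φ, rfl⟩ :)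
  have hPsum : P (∑ i, f i) = ∑ i, f i := by
    obtain ⟨φ, hφ⟩ : ∑ i, f i ∈ Set.range P :=
      hPran ▸ fun y hy => by rw [sum_apply]; exact hfJ y hy
    rw [← hφ, hPP]
  obtain ⟨k, hk⟩ := hX.exists_isSkewDecomposition (fun i => f i - P (f i))
    (by rw [Finset.sum_sub_distrib, ← map_sum, hPsum, sub_self])
  calc ∑ i, f i (a i) = ∑ i, P (f i) (a i - b i) + ∑ i, (f i - P (f i)) (a i) := by
        rw [← Finset.sum_add_distrib]
        refine Finset.sum_congr rfl fun i _ => ?_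
        rw [map_sub, hPJ _ _ (hbJ i), sub_apply]
        ring
    _ ≤ ∑ i, ρ i * ‖P (f i)‖ + ∑ i, ρ i * ‖f i - P (f i)‖ := by
        gcongr ?_ + ?_
        · refine Finset.sum_le_sum fun i _ => ?_
          rw [mul_comm]
          exact (le_abs_self _).trans ((P (f i)).le_opNorm_of_le (hab i))
        · exact hk.sum_apply_le a ρ hpair
    _ = ∑ i, ρ i * ‖f i‖ := by simp only [← Finset.sum_add_distrib, ← mul_add, ← hPL]

theorem IsMIdeal.exists_mem_forall_norm_sub_le (hX : IsL1Predual X) (hJ : IsMIdeal J)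
    (a b : ι → X) (ρ : ι → ℝ) (hpair : ∀ i j, ‖a i - a j‖ ≤ ρ i + ρ j)
    (hbJ : ∀ i, b i ∈ J) (hab : ∀ i, ‖a i - b i‖ ≤ ρ i) {ε : ℝ} (hε : 0 < ε) :
    ∃ y ∈ J, ∀ i, ‖y - a i‖ ≤ ρ i + ε := by
  classical
  have hρε : ∀ i, 0 < ρ i + ε := fun i => by linarith [hpair i i, norm_nonneg (a i - a i)]
  set diag : Submodule ℝ (ι → X) := J.map (LinearMap.pi fun _ => LinearMap.id)
  set D : Set (ι → X) := (diag : Set (ι → X)) + univ.pi fun i => ball 0 (ρ i + ε)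
  have hdiag : ∀ y ∈ J, ∀ z ∈ univ.pi (fun i => ball (0 : X) (ρ i + ε)),
      (fun _ => y) + z ∈ D := fun y hy z hz => add_mem_add ⟨y, hy, rfl⟩ hz
  by_cases ha : a ∈ D
  · obtain ⟨_, ⟨y, hy, rfl⟩, z, hz, rfl⟩ := ha
    refine ⟨y, hy, fun i => ?_⟩
    simpa using (mem_ball_zero_iff.1 (hz i (mem_univ i))).le
  -- A functional separating `a` from `D` vanishes on `diag J` and has `∑ (ρᵢ + ε) ‖fᵢ‖ ≤ g a`,
  -- which the `L₁`-estimate `IsMIdeal.sum_apply_le` only allows for `g = 0`.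
  exfalso
  obtain ⟨g, hg⟩ := geometric_hahn_banach_open_point (diag.convex.add (convex_pi fun i _ =>
    convex_ball _ _)) (isOpen_set_pi finite_univ fun i _ => isOpen_ball).add_left ha
  set f : ι → StrongDual ℝ X := fun i => g.comp (ContinuousLinearMap.single ℝ (fun _ => X) i)
  have hg_apply : ∀ u, g u = ∑ i, f i (u i) := fun u => by
    simp only [f, ContinuousLinearMap.comp_apply, ContinuousLinearMap.single_apply, ← map_sum,
      Finset.univ_sum_single]
  have h0 : (0 : ι → X) ∈ univ.pi fun i => ball (0 : X) (ρ i + ε) :=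
    fun i _ => mem_ball_self (hρε i)
  have hfJ : ∀ y ∈ J, ∑ i, f i y = 0 := by
    intro y hy
    have hlt : ∀ t : ℝ, t * ∑ i, f i y < g a := fun t => by
      simpa [hg_apply, Finset.mul_sum] using hg _ (hdiag _ (J.smul_mem t hy) 0 h0)
    by_contra hne
    simpa [div_mul_cancel₀ _ hne] using hlt (g a / ∑ i, f i y)
  have hsup : ∑ i, (ρ i + ε) * ‖f i‖ ≤ ∑ i, f i (a i) :=
    sum_mul_norm_le_of_forall_mem_pi_ball f hρε fun z hz => by
      simpa [hg_apply] using hg _ (hdiag 0 J.zero_mem z hz)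
  have hle := hJ.sum_apply_le hX f hfJ a b ρ hpair hbJ hab
  have hf : ∀ i, f i = 0 := by
    have hsum : ∑ i, ε * ‖f i‖ = 0 := le_antisymm
      (by simp only [add_mul, Finset.sum_add_distrib] at hsup; linarith)
      (Finset.sum_nonneg fun i _ => by positivity)
    intro i
    simpa [hε.ne'] using
      (Finset.sum_eq_zero_iff_of_nonneg fun i _ => by positivity).1 hsum i (Finset.mem_univ i)
  simpa [hg_apply, hf] using hg _ (hdiag 0 J.zero_mem 0 h0)

end BallIntersection

section Chebyshev

variable {X : Type*} [NormedAddCommGroup X] {F V : Set X} {x f : X}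

lemma norm_sub_le_chebR (hF : Bornology.IsBounded F) (x : X) (hf : f ∈ F) :
    ‖x - f‖ ≤ chebR x F := by
  obtain ⟨R, hR⟩ := hF.subset_closedBall x
  refine le_ciSup (f := fun b : F => ‖x - (b : X)‖) ⟨R, ?_⟩ ⟨f, hf⟩
  rintro _ ⟨b, rfl⟩
  simpa [dist_eq_norm, norm_sub_rev] using hR b.2

lemma chebR_le (hF : F.Nonempty) {c : ℝ} (h : ∀ f ∈ F, ‖x - f‖ ≤ c) : chebR x F ≤ c :=
  have := hF.to_subtype
  ciSup_le fun b => h b b.2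

lemma chebR_nonneg (x : X) (F : Set X) : 0 ≤ chebR x F :=
  Real.iSup_nonneg fun _ => norm_nonneg _

lemma continuous_chebR (hF : Bornology.IsBounded F) (hFne : F.Nonempty) :
    Continuous fun x => chebR x F := by
  refine (LipschitzWith.of_le_add fun x y => chebR_le hFne fun f hf => ?_).continuous
  calc ‖x - f‖ ≤ ‖y - f‖ + ‖x - y‖ := by
        rw [add_comm]; exact norm_sub_le_norm_sub_add_norm_sub x y f
    _ ≤ chebR y F + dist x y := by
        rw [dist_eq_norm]; gcongr; exact norm_sub_le_chebR hF y hf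

lemma exists_chebR_lt_chebRad_add (hV : V.Nonempty) {η : ℝ} (hη : 0 < η) :
    ∃ u ∈ V, chebR u F < chebRad V F + η := by
  have := hV.to_subtype
  obtain ⟨u, hu⟩ := exists_lt_of_ciInf_lt (lt_add_of_pos_right (chebRad V F) hη)
  exact ⟨u, u.2, hu⟩

end Chebyshev

lemma exists_tendsto_of_forall_exists_dist_le {α : Type*} [PseudoMetricSpace α]
    [CompleteSpace α] {S : ℕ → Set α} {C q : ℝ} (hq : q < 1) (h₀ : (S 0).Nonempty)
    (hstep : ∀ k, ∀ x ∈ S k, ∃ y ∈ S (k + 1), dist x y ≤ C * q ^ k) :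
    ∃ u : ℕ → α, (∀ k, u k ∈ S k) ∧ ∃ z, Tendsto u atTop (𝓝 z) := by
  choose! next hnext hdist using hstep
  obtain ⟨x₀, hx₀⟩ := h₀
  let u : ℕ → α := fun k => Nat.rec x₀ next k
  have hu : ∀ k, u k ∈ S k := fun k => Nat.rec hx₀ (fun k ih => hnext k _ ih) k
  exact ⟨u, hu, cauchySeq_tendsto_of_complete
    (cauchySeq_of_le_geometric q C hq fun k => hdist k _ (hu k))⟩

lemma Continuous.le_of_tendsto_of_le_add {α : Type*} [TopologicalSpace α] {φ : α → ℝ}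
    (hφ : Continuous φ) {u : ℕ → α} {z : α} (hu : Tendsto u atTop (𝓝 z)) {D : ℕ → ℝ}
    (hD : Tendsto D atTop (𝓝 0)) {c : ℝ} (h : ∀ k, φ (u k) ≤ c + D k) : φ z ≤ c :=
  le_of_tendsto_of_tendsto' ((hφ.tendsto z).comp hu)
    (by simpa using tendsto_const_nhds.add hD) h

section Approximation

variable {X : Type*} [NormedAddCommGroup X] [NormedSpace ℝ X] {J : Submodule ℝ X}
  {F : Set X}

theorem IsMIdeal.exists_almost_center_near (hX : IsL1Predual X) (hJ : IsMIdeal J)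
    (hF : IsCompact F) (hFne : F.Nonempty) {x v u : X} {ε δ r η : ℝ}
    (hxJ : x ∈ J) (hvJ : v ∈ J) (huJ : u ∈ J) (hx : ‖x‖ ≤ 1) (hu : ‖u‖ ≤ 1)
    (hv : ‖v‖ ≤ 1 + δ) (hvx : ‖v - x‖ ≤ ε + δ) (hxF : chebR x F ≤ r + ε)
    (hvF : chebR v F ≤ r + δ) (huF : chebR u F ≤ r + η) (hε : 0 ≤ ε) (hδ : 0 ≤ δ)
    (hη : 0 < η) :
    ∃ w ∈ J, ‖w‖ ≤ 1 + η ∧ ‖w - x‖ ≤ ε + η ∧ ‖w - v‖ ≤ δ + η ∧ chebR w F ≤ r + 3 * η := by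
  obtain ⟨t, htF, htfin, hFt⟩ := hF.finite_cover_balls hη
  have := htfin.fintype
  have hfu : ∀ f ∈ F, ‖f - u‖ ≤ r + η := fun f hf => by
    rw [norm_sub_rev]; exact (norm_sub_le_chebR hF.isBounded u hf).trans huF
  have hxf : ∀ f ∈ F, ‖x - f‖ ≤ r + ε := fun f hf =>
    (norm_sub_le_chebR hF.isBounded x hf).trans hxF
  have hvf : ∀ f ∈ F, ‖v - f‖ ≤ r + δ := fun f hf =>
    (norm_sub_le_chebR hF.isBounded v hf).trans hvF
  -- the balls `B[0, 1]`, `B[x, ε]`, `B[v, δ]` and `B[f, r + η]` for `f` in an `η`-net of `F`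
  let a : Fin 3 ⊕ t → X := Sum.elim ![0, x, v] (↑)
  let b : Fin 3 ⊕ t → X := Sum.elim ![0, x, v] fun _ => u
  let ρ : Fin 3 ⊕ t → ℝ := Sum.elim ![1, ε, δ] fun _ => r + η
  have hpair : ∀ i j, ‖a i - a j‖ ≤ ρ i + ρ j := by
    have h0f : ∀ f ∈ F, ‖f‖ ≤ r + η + 1 := fun f hf => by
      simpa using (norm_sub_le_norm_sub_add_norm_sub f u 0).trans
        (add_le_add (hfu f hf) (by simpa using hu))
    rintro (i | ⟨f, hf⟩) (j | ⟨g, hg⟩)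
    · fin_cases i <;> fin_cases j <;> simp [a, ρ, norm_sub_rev x v] <;> linarith
    · fin_cases i <;> simp [a, ρ]
      · linarith [h0f g (htF hg)]
      · linarith [hxf g (htF hg)]
      · linarith [hvf g (htF hg)]
    · fin_cases j <;> simp [a, ρ, norm_sub_rev f]
      · linarith [h0f f (htF hf)]
      · linarith [hxf f (htF hf)]
      · linarith [hvf f (htF hf)]
    · have := norm_sub_le_norm_sub_add_norm_sub f u g
      rw [norm_sub_rev u g] at this
      simp only [a, ρ, Sum.elim_inr]
      linarith [hfu f (htF hf), hfu g (htF hg)]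
  have hbJ : ∀ i, b i ∈ J := by
    rintro (i | f)
    · fin_cases i <;> simp [b, hxJ, hvJ]
    · exact huJ
  have hab : ∀ i, ‖a i - b i‖ ≤ ρ i := by
    rintro (i | ⟨f, hf⟩)
    · fin_cases i <;> simp [a, b, ρ, hε, hδ]
    · exact hfu f (htF hf)
  obtain ⟨w, hwJ, hw⟩ := hJ.exists_mem_forall_norm_sub_le hX a b ρ hpair hbJ hab hη
  refine ⟨w, hwJ, by simpa [a, ρ] using hw (.inl 0), by simpa [a, ρ] using hw (.inl 1),
    by simpa [a, ρ] using hw (.inl 2), chebR_le hFne fun f hf => ?_⟩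
  obtain ⟨g, hg, hfg⟩ := mem_iUnion₂.1 (hFt hf)
  calc ‖w - f‖ ≤ ‖w - g‖ + ‖g - f‖ := norm_sub_le_norm_sub_add_norm_sub w g f
    _ ≤ (r + η + η) + η := by
        gcongr
        · exact hw (.inr ⟨g, hg⟩)
        · rw [norm_sub_rev, ← dist_eq_norm]; exact (mem_ball.1 hfg).le
    _ = r + 3 * η := by ring

theorem IsMIdeal.exists_mem_chebCent_norm_sub_le [CompleteSpace X] (hX : IsL1Predual X)
    (hJc : IsClosed (J : Set X)) (hJ : IsMIdeal J) (hF : IsCompact F) (hFne : F.Nonempty)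
    {ε : ℝ} (hε : 0 < ε) {x : X} (hx : x ∈ (J : Set X) ∩ closedBall 0 1)
    (hxF : chebR x F ≤ chebRad ((J : Set X) ∩ closedBall 0 1) F + ε) :
    ∃ z ∈ chebCent ((J : Set X) ∩ closedBall 0 1) F, ‖x - z‖ ≤ ε := by
  set V := (J : Set X) ∩ closedBall 0 1
  set r := chebRad V F
  have hV : V.Nonempty := ⟨0, J.zero_mem, mem_closedBall_self zero_le_one⟩
  obtain ⟨hxJ, hx1⟩ := hx
  rw [mem_closedBall_zero_iff] at hx1
  let D : ℕ → ℝ := fun k => ε * (1 / 2) ^ k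
  have hD : ∀ k, 0 < D k := fun k => by positivity
  let S : ℕ → Set X := fun k =>
    {w | w ∈ J ∧ ‖w‖ ≤ 1 + D k ∧ ‖w - x‖ ≤ ε + D k ∧ chebR w F ≤ r + D k}
  have hstep : ∀ k, ∀ w ∈ S k, ∃ w' ∈ S (k + 1), dist w w' ≤ (2 * ε) * (1 / 2) ^ k := by
    rintro k w ⟨hwJ, hw1, hwx, hwF⟩
    have hDsucc : D (k + 1) = D k / 2 := by simp only [D, pow_succ]; ring
    have hη : 0 < D (k + 1) / 3 := by linarith [hD (k + 1)]
    obtain ⟨u, ⟨huJ, hu1⟩, huF⟩ := exists_chebR_lt_chebRad_add (F := F) hV hη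
    obtain ⟨w', hw'J, hw'1, hw'x, hw'w, hw'F⟩ := hJ.exists_almost_center_near hX hF hFne
      hxJ hwJ huJ hx1 (mem_closedBall_zero_iff.1 hu1) hw1 hwx hxF hwF huF.le hε.le (hD k).le hη
    refine ⟨w', ⟨hw'J, by linarith, by linarith, by linarith⟩, ?_⟩
    rw [dist_eq_norm, norm_sub_rev]
    linarith [show D k = ε * (1 / 2) ^ k from rfl]
  have hx₀ : x ∈ S 0 := ⟨hxJ, by simp [D]; linarith, by simp [D, hε.le], by simpa [D] using hxF⟩
  obtain ⟨w, hw, z, hz⟩ := exists_tendsto_of_forall_exists_dist_le (by norm_num) ⟨x, hx₀⟩ hstep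
  have hDlim : Tendsto D atTop (𝓝 0) := by
    simpa [D] using (tendsto_pow_atTop_nhds_zero_of_lt_one (by norm_num : (0 : ℝ) ≤ 1 / 2)
      (by norm_num)).const_mul ε
  have hzJ : z ∈ J := hJc.mem_of_tendsto hz (Eventually.of_forall fun k => (hw k).1)
  have hz1 : ‖z‖ ≤ 1 := continuous_norm.le_of_tendsto_of_le_add hz hDlim fun k => (hw k).2.1
  have hzx : ‖z - x‖ ≤ ε := (continuous_norm.comp (continuous_sub_right x))
    |>.le_of_tendsto_of_le_add hz hDlim fun k => (hw k).2.2.1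
  have hzF : chebR z F ≤ r := (continuous_chebR hF.isBounded hFne).le_of_tendsto_of_le_add
    hz hDlim fun k => (hw k).2.2.2
  exact ⟨z, ⟨⟨hzJ, mem_closedBall_zero_iff.2 hz1⟩, hzF⟩, by rwa [norm_sub_rev]⟩

end Approximation

/-- if `X` is an `L₁`-predual and `J` an `M`-ideal in `X`, then
`(X, B_J, K(X))` has property-(P₁). -/
theorem stmt_12 {X : Type*} [NormedAddCommGroup X] [NormedSpace ℝ X] [CompleteSpace X]
    (hX : IsL1Predual X) (J : Submodule ℝ X) (hJc : IsClosed (J : Set X)) (hJ : IsMIdeal J) :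
    ∀ F : Set X, F.Nonempty → IsCompact F →
      (chebCent ((J : Set X) ∩ closedBall 0 1) F).Nonempty ∧
      ∀ ε > (0 : ℝ), ∀ x ∈ (J : Set X) ∩ closedBall 0 1,
        chebR x F ≤ chebRad ((J : Set X) ∩ closedBall 0 1) F + ε →
        ∃ z ∈ chebCent ((J : Set X) ∩ closedBall 0 1) F, ‖x - z‖ ≤ ε := by
  intro F hFne hF
  refine ⟨?_, fun ε hε x hx hxF => hJ.exists_mem_chebCent_norm_sub_le hX hJc hF hFne hε hx hxF⟩
  have hV : ((J : Set X) ∩ closedBall 0 1).Nonempty :=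
    ⟨0, J.zero_mem, mem_closedBall_self zero_le_one⟩
  obtain ⟨u, hu, huF⟩ := exists_chebR_lt_chebRad_add (F := F) hV one_pos
  obtain ⟨z, hz, -⟩ := hJ.exists_mem_chebCent_norm_sub_le hX hJc hF hFne one_pos hu huF.le
  exact ⟨z, hz⟩
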